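/- Let θ > 0 and ε ∈ (0, 1). Then there exists a constant C > 0 (depending only on θ and ε) such that for every α ∈ (0, 1) and every u > 0 with u ≥ α and ε ≤ |u − θ| ≤ 1/ε, one has (u − θ)(ψ(u) − ψ(θ)) / ψ′(u) ≥ C α² / 2. -/

import Mathlib

/-!
On the region `ε ≤ |u - θ| ≤ 1/ε`, monotonicity of `ψ` keeps the numerator
`(u - θ)(ψ(u) - ψ(θ)) = |u - θ| |ψ(u) - ψ(θ)|` above a positive constant, while `u ≤ θ + 1/ε`
and the recurrence `ψ′(u) = ψ′(u + 1) + u⁻²` give `ψ′(u) ≤ K / u²`. Hence the quotient is at least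
a constant times `u² ≥ α²`.
-/

open Real Set Filter

/-- The digamma function `ψ(x) = (d/dx) log Γ(x)`. -/
noncomputable def digamma (x : ℝ) : ℝ := deriv (fun y => Real.log (Real.Gamma y)) x

/-- The trigamma function `ψ′(x) = (d²/dx²) log Γ(x)`. -/
noncomputable def trigamma (x : ℝ) : ℝ := deriv digamma x

theorem Real.analyticAt_Gamma {x : ℝ} (hx : 0 < x) : AnalyticAt ℝ Gamma x := by
  have hinv : AnalyticAt ℂ (fun s => (Complex.Gamma s)⁻¹) x :=
    Complex.differentiable_one_div_Gamma.analyticAt _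
  have hG : AnalyticAt ℂ Complex.Gamma x := by
    refine (hinv.inv ?_).congr (Eventually.of_forall fun s => inv_inv (Complex.Gamma s))
    exact inv_ne_zero (Complex.Gamma_ne_zero_of_re_pos (by simpa using hx))
  refine ((Complex.reCLM.analyticAt _).comp
    (hG.restrictScalars.comp (Complex.ofRealCLM.analyticAt x))).congr (Eventually.of_forall ?_)
  intro y
  simp [Complex.Gamma_ofReal]

theorem analyticOnNhd_log_Gamma : AnalyticOnNhd ℝ (fun y => log (Gamma y)) (Ioi 0) :=
  fun _ hx => (analyticAt_Gamma hx).log (Gamma_pos_of_pos hx)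

theorem analyticOnNhd_digamma : AnalyticOnNhd ℝ digamma (Ioi 0) :=
  analyticOnNhd_log_Gamma.deriv

theorem continuousOn_trigamma : ContinuousOn trigamma (Ioi 0) :=
  analyticOnNhd_digamma.deriv.continuousOn

theorem hasDerivAt_log_Gamma {x : ℝ} (hx : 0 < x) :
    HasDerivAt (fun y => log (Gamma y)) (digamma x) x :=
  (analyticOnNhd_log_Gamma x hx).differentiableAt.hasDerivAt

theorem hasDerivAt_digamma {x : ℝ} (hx : 0 < x) : HasDerivAt digamma (trigamma x) x :=
  (analyticOnNhd_digamma x hx).differentiableAt.hasDerivAt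

theorem monotoneOn_digamma : MonotoneOn digamma (Ioi 0) :=
  convexOn_log_Gamma.monotoneOn_deriv fun _ hx => (hasDerivAt_log_Gamma hx).differentiableAt

theorem trigamma_nonneg {x : ℝ} (hx : 0 < x) : 0 ≤ trigamma x :=
  (hasDerivAt_digamma hx).hasDerivWithinAt.nonneg_of_monotoneOn
    (accPt_principal_iff_nhdsWithin.2 (by simpa using nhdsGT_neBot x))
    (monotoneOn_digamma.mono (Ioi_subset_Ioi hx.le))

theorem digamma_add_one {x : ℝ} (hx : 0 < x) : digamma (x + 1) = digamma x + x⁻¹ := by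
  have hshift : HasDerivAt (fun y => log (Gamma (y + 1))) (digamma (x + 1)) x := by
    simpa using (hasDerivAt_log_Gamma (by linarith : (0 : ℝ) < x + 1)).comp_add_const x 1
  have hsum : HasDerivAt (fun y => log (Gamma y) + log y) (digamma x + x⁻¹) x :=
    (hasDerivAt_log_Gamma hx).add (hasDerivAt_log hx.ne')
  refine hshift.unique (hsum.congr_of_eventuallyEq ?_)
  filter_upwards [eventually_gt_nhds hx] with y hy
  rw [Gamma_add_one hy.ne', log_mul hy.ne' (Gamma_pos_of_pos hy).ne', add_comm]

theorem trigamma_add_one {x : ℝ} (hx : 0 < x) : trigamma (x + 1) = trigamma x - (x ^ 2)⁻¹ := by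
  have hshift : HasDerivAt (fun y => digamma (y + 1)) (trigamma (x + 1)) x := by
    simpa using (hasDerivAt_digamma (by linarith : (0 : ℝ) < x + 1)).comp_add_const x 1
  have hsum : HasDerivAt (fun y => digamma y + y⁻¹) (trigamma x + -(x ^ 2)⁻¹) x :=
    (hasDerivAt_digamma hx).add (hasDerivAt_inv hx.ne')
  rw [← sub_eq_add_neg] at hsum
  refine hshift.unique (hsum.congr_of_eventuallyEq ?_)
  filter_upwards [eventually_gt_nhds hx] with y hy
  exact digamma_add_one hy

theorem trigamma_pos {x : ℝ} (hx : 0 < x) : 0 < trigamma x := by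
  have hsq : 0 < (x ^ 2)⁻¹ := by positivity
  linarith [trigamma_add_one hx, trigamma_nonneg (by linarith : (0 : ℝ) < x + 1)]

theorem strictMonoOn_digamma : StrictMonoOn digamma (Ioi 0) :=
  strictMonoOn_of_deriv_pos (convex_Ioi 0)
    (fun x hx => (hasDerivAt_digamma hx).continuousAt.continuousWithinAt)
    fun x hx => by
      rw [interior_Ioi] at hx
      rw [(hasDerivAt_digamma hx).deriv]
      exact trigamma_pos hx

theorem sub_mul_digamma_sub_nonneg {u θ : ℝ} (hu : 0 < u) (hθ : 0 < θ) :
    0 ≤ (u - θ) * (digamma u - digamma θ) := by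
  rcases le_total u θ with h | h
  · exact mul_nonneg_of_nonpos_of_nonpos (sub_nonpos.2 h)
      (sub_nonpos.2 (monotoneOn_digamma hu hθ h))
  · exact mul_nonneg (sub_nonneg.2 h) (sub_nonneg.2 (monotoneOn_digamma hθ hu h))

theorem exists_pos_le_abs_digamma_sub {θ ε : ℝ} (hθ : 0 < θ) (hε : 0 < ε) :
    ∃ m > 0, ∀ u > 0, ε ≤ |u - θ| → m ≤ |digamma u - digamma θ| := by
  -- `θ - ε` may be nonpositive; any point of `(0, θ)` above it serves on the left of `θ`
  set a := max (θ - ε) (θ / 2)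
  have ha : 0 < a := lt_max_of_lt_right (half_pos hθ)
  have haθ : a < θ := max_lt (by linarith) (half_lt_self hθ)
  have hθε : 0 < θ + ε := by linarith
  refine ⟨min (digamma (θ + ε) - digamma θ) (digamma θ - digamma a),
    lt_min (sub_pos.2 (strictMonoOn_digamma hθ hθε (by linarith)))
      (sub_pos.2 (strictMonoOn_digamma ha hθ haθ)), fun u hu hεu => ?_⟩
  rcases le_abs'.1 hεu with h | h
  · have hua : u ≤ a := le_max_of_le_left (by linarith)
    have := monotoneOn_digamma hu ha hua
    rw [abs_sub_comm]
    exact (min_le_right _ _).trans ((by linarith : digamma θ - digamma a ≤ _).trans (le_abs_self _))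
  · have := monotoneOn_digamma hθε hu (by linarith)
    exact (min_le_left _ _).trans ((by linarith : _ ≤ digamma u - digamma θ).trans (le_abs_self _))

theorem exists_sq_mul_trigamma_le (T : ℝ) : ∃ K > 0, ∀ u ∈ Ioc 0 T, u ^ 2 * trigamma u ≤ K := by
  obtain ⟨M, hM⟩ := (isCompact_Icc (a := 1) (b := T + 1)).exists_bound_of_continuousOn
    (continuousOn_trigamma.mono fun x hx => lt_of_lt_of_le one_pos hx.1)
  refine ⟨T ^ 2 * |M| + 1, by positivity, fun u ⟨hu, huT⟩ => ?_⟩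
  have hshift : trigamma (u + 1) ≤ |M| :=
    ((le_abs_self _).trans (hM (u + 1) ⟨by linarith, by linarith⟩)).trans (le_abs_self M)
  have hrec : u ^ 2 * trigamma u = u ^ 2 * trigamma (u + 1) + 1 := by
    rw [trigamma_add_one hu, mul_sub, mul_inv_cancel₀ (by positivity)]
    ring
  have hsq : u ^ 2 ≤ T ^ 2 := pow_le_pow_left₀ hu.le huT 2
  rw [hrec]
  nlinarith [abs_nonneg M, sq_nonneg u]

/-- Let `θ > 0` and `ε ∈ (0, 1)`. Then there exists a constant `C > 0` (depending only on `θ`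
and `ε`) such that for every `α ∈ (0, 1)` and every `u > 0` with `u ≥ α` and
`ε ≤ |u − θ| ≤ 1/ε`, one has `(u − θ)(ψ(u) − ψ(θ)) / ψ′(u) ≥ C α² / 2`. -/
theorem stmt_15 (θ : ℝ) (hθ : 0 < θ) (ε : ℝ) (hε : ε ∈ Set.Ioo (0 : ℝ) 1) :
    ∃ C > (0 : ℝ), ∀ α ∈ Set.Ioo (0 : ℝ) 1, ∀ u : ℝ, 0 < u → α ≤ u →
      ε ≤ |u - θ| → |u - θ| ≤ 1 / ε →
      C * α ^ 2 / 2 ≤ (u - θ) * (digamma u - digamma θ) / trigamma u := by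
  obtain ⟨hε₀, -⟩ := hε
  obtain ⟨m, hm, hm_le⟩ := exists_pos_le_abs_digamma_sub hθ hε₀
  obtain ⟨K, hK, hK_le⟩ := exists_sq_mul_trigamma_le (θ + 1 / ε)
  refine ⟨2 * ε * m / K, by positivity, ?_⟩
  rintro α ⟨hα, -⟩ u hu hαu hεu hu_le
  have hnum : ε * m ≤ (u - θ) * (digamma u - digamma θ) := by
    rw [← abs_of_nonneg (sub_mul_digamma_sub_nonneg hu hθ), abs_mul]
    exact mul_le_mul hεu (hm_le u hu hεu) hm.le (abs_nonneg _)
  have htri : u ^ 2 * trigamma u ≤ K := hK_le u ⟨hu, by linarith [le_abs_self (u - θ)]⟩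
  have htri₀ := trigamma_pos hu
  rw [le_div_iff₀ htri₀]
  calc 2 * ε * m / K * α ^ 2 / 2 * trigamma u = ε * m * (α ^ 2 * trigamma u / K) := by ring
    _ ≤ ε * m * (u ^ 2 * trigamma u / K) := by gcongr
    _ ≤ ε * m := mul_le_of_le_one_right (by positivity) ((div_le_one hK).2 htri)
    _ ≤ _ := hnum
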